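/- The functional J_∞(Q) = (1/|N|) Σ_{ℓ∈Z²_N} Ψ(ζ_ℓ) exp(−Q(ζ_ℓ)) + Σ_{k∈Λ} q_k c_k, defined on all real trigonometric polynomials Q with support Λ (no positivity constraint), is strictly convex when Ψ(ζ_ℓ) > 0 for all ℓ and 2n_j < N_j; its second variation along δQ is (1/|N|) Σ_ℓ Ψ(ζ_ℓ) e^{−Q(ζ_ℓ)} δQ(ζ_ℓ)², which vanishes only for δQ = 0. -/

import Mathlib

/-!
Write `J(q) = Σ_ℓ w_ℓ exp(-(Lq)_ℓ) + f(q)` with `w_ℓ = Ψ(ζ_ℓ)/|N| > 0`, `f` linear and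
`L q = (Q(ζ_ℓ))_ℓ` the (linear) evaluation of `Q` on the grid. Then `J` is convex, and strictly
convex on the admissible coefficients as soon as `L` is injective there: two distinct `Q` differ at
some grid point, where `exp` is strictly convex. The same injectivity makes the second variation
`Σ_ℓ w_ℓ e^{-Q(ζ_ℓ)} δQ(ζ_ℓ)²` vanish only for `δQ = 0`.

Injectivity is discrete Fourier inversion. Symmetry `q_k = q_{-k}` makes `Σ_k q_k ζ_ℓ^k` real,
so its real part vanishing means it vanishes; and as `2 n_j < N_j`, distinct frequencies in `Λ`
stay distinct modulo `N_j`, so orthogonality of the characters `ℓ ↦ ζ_ℓ^k` on the grid recovers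
each `q_k`.
-/

open Finset

section Fourier

open Complex

noncomputable def unitChar (N : ℕ) (m : ℤ) (ℓ : ℕ) : ℂ :=
  exp (I * m * ℓ * (2 * Real.pi / N))

lemma unitChar_eq_pow (N : ℕ) (m : ℤ) (ℓ : ℕ) :
    unitChar N m ℓ = (exp (2 * Real.pi * I / N) ^ m) ^ ℓ := by
  rw [unitChar, ← exp_int_mul, ← exp_nat_mul]
  ring_nf

lemma unitChar_mul_unitChar (N : ℕ) (m m' : ℤ) (ℓ : ℕ) :
    unitChar N m ℓ * unitChar N m' ℓ = unitChar N (m + m') ℓ := by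
  simp only [unitChar, ← exp_add]
  push_cast
  ring_nf

lemma conj_unitChar (N : ℕ) (m : ℤ) (ℓ : ℕ) :
    starRingEnd ℂ (unitChar N m ℓ) = unitChar N (-m) ℓ := by
  rw [unitChar, unitChar, ← exp_conj]
  congr 1
  simp [Complex.ext_iff]

lemma sum_range_unitChar {N : ℕ} (hN : 0 < N) (m : ℤ) :
    ∑ ℓ ∈ range N, unitChar N m ℓ = if (N : ℤ) ∣ m then (N : ℂ) else 0 := by
  have hω := (isPrimitiveRoot_exp N hN.ne').zpow_eq_one_iff_dvd
  have hpowN : (exp (2 * Real.pi * I / N) ^ m) ^ N = 1 := by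
    rw [← zpow_natCast, ← zpow_mul, hω]
    exact dvd_mul_left _ _
  simp only [unitChar_eq_pow]
  split_ifs with hm
  · simp [(hω m).2 hm]
  · rw [geom_sum_eq (mt (hω m).1 hm), hpowN, sub_self, zero_div]

lemma sum_range_mul_unitChar_neg {N : ℕ} (hN : 0 < N) {S : Finset ℤ}
    (hS : Set.InjOn (Int.cast : ℤ → ZMod N) S) (a : ℤ → ℂ) {m₀ : ℤ} (hm₀ : m₀ ∈ S) :
    ∑ ℓ ∈ range N, (∑ m ∈ S, a m * unitChar N m ℓ) * unitChar N (-m₀) ℓ = N * a m₀ := by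
  calc ∑ ℓ ∈ range N, (∑ m ∈ S, a m * unitChar N m ℓ) * unitChar N (-m₀) ℓ
      = ∑ m ∈ S, a m * ∑ ℓ ∈ range N, unitChar N (m - m₀) ℓ := by
        simp only [sum_mul, mul_sum, mul_assoc, unitChar_mul_unitChar, ← sub_eq_add_neg]
        exact sum_comm
    _ = N * a m₀ := by
        rw [sum_eq_single_of_mem m₀ hm₀ fun m hm hne => ?_]
        · simp [sum_range_unitChar hN, mul_comm]
        · rw [sum_range_unitChar hN, if_neg, mul_zero]
          rw [← ZMod.intCast_eq_intCast_iff_dvd_sub]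
          exact fun h => hne (hS hm hm₀ h.symm)

lemma eq_zero_of_sum_mul_unitChar_eq_zero {N : ℕ} (hN : 0 < N) {S : Finset ℤ}
    (hS : Set.InjOn (Int.cast : ℤ → ZMod N) S) {a : ℤ → ℂ}
    (h : ∀ ℓ < N, ∑ m ∈ S, a m * unitChar N m ℓ = 0) : ∀ m ∈ S, a m = 0 := by
  intro m₀ hm₀
  have := sum_range_mul_unitChar_neg hN hS a hm₀
  rw [sum_eq_zero fun ℓ hℓ => by rw [h ℓ (mem_range.1 hℓ), zero_mul]] at this
  exact (mul_eq_zero.1 this.symm).resolve_left (Nat.cast_ne_zero.2 hN.ne')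

lemma injOn_intCast_Icc {N n : ℕ} (h : 2 * n < N) :
    Set.InjOn (Int.cast : ℤ → ZMod N) (Icc (-(n : ℤ)) n) := by
  intro m hm m' hm' hmm'
  simp only [coe_Icc, Set.mem_Icc] at hm hm'
  have := Int.eq_zero_of_abs_lt_dvd ((ZMod.intCast_eq_intCast_iff_dvd_sub _ _ _).1 hmm')
    (by rw [abs_lt]; omega)
  omega

noncomputable def gridChar (N₁ N₂ : ℕ) (k : ℤ × ℤ) (ℓ : ℕ × ℕ) : ℂ :=
  unitChar N₁ k.1 ℓ.1 * unitChar N₂ k.2 ℓ.2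

lemma conj_gridChar (N₁ N₂ : ℕ) (k : ℤ × ℤ) (ℓ : ℕ × ℕ) :
    starRingEnd ℂ (gridChar N₁ N₂ k ℓ) = gridChar N₁ N₂ (-k) ℓ := by
  simp only [gridChar, map_mul, conj_unitChar, Prod.fst_neg, Prod.snd_neg]

lemma eq_zero_of_sum_mul_gridChar_eq_zero {N₁ N₂ : ℕ} (hN₁ : 0 < N₁) (hN₂ : 0 < N₂)
    {S₁ S₂ : Finset ℤ} (hS₁ : Set.InjOn (Int.cast : ℤ → ZMod N₁) S₁)
    (hS₂ : Set.InjOn (Int.cast : ℤ → ZMod N₂) S₂) {a : ℤ × ℤ → ℂ}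
    (h : ∀ ℓ ∈ range N₁ ×ˢ range N₂, ∑ k ∈ S₁ ×ˢ S₂, a k * gridChar N₁ N₂ k ℓ = 0) :
    ∀ k ∈ S₁ ×ˢ S₂, a k = 0 := by
  rintro ⟨k₁, k₂⟩ hk
  rw [mem_product] at hk
  have hpartial : ∀ ℓ₂ < N₂, ∀ m ∈ S₁, ∑ m₂ ∈ S₂, a (m, m₂) * unitChar N₂ m₂ ℓ₂ = 0 :=
    fun ℓ₂ hℓ₂ => eq_zero_of_sum_mul_unitChar_eq_zero hN₁ hS₁ fun ℓ₁ hℓ₁ => by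
      rw [← h (ℓ₁, ℓ₂) (mem_product.2 ⟨mem_range.2 hℓ₁, mem_range.2 hℓ₂⟩), sum_product]
      simp only [sum_mul, gridChar]
      exact sum_congr rfl fun _ _ => sum_congr rfl fun _ _ => by ring
  exact eq_zero_of_sum_mul_unitChar_eq_zero hN₂ hS₂ (fun ℓ₂ hℓ₂ => hpartial ℓ₂ hℓ₂ k₁ hk.1)
    k₂ hk.2

def symmetricTrigPoly (Λ : Finset (ℤ × ℤ)) : Submodule ℝ (ℤ × ℤ → ℝ) where
  carrier := {q | (∀ k, q k = q (-k)) ∧ ∀ k ∉ Λ, q k = 0}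
  add_mem' hq hq' :=
    ⟨fun k => by simp [hq.1 k, hq'.1 k], fun k hk => by simp [hq.2 k hk, hq'.2 k hk]⟩
  zero_mem' := ⟨fun _ => rfl, fun _ _ => rfl⟩
  smul_mem' c q hq := ⟨fun k => by simp [hq.1 k], fun k hk => by simp [hq.2 k hk]⟩

def trigPolyEval (ζ : ℤ × ℤ → ℕ × ℕ → ℂ) (Λ : Finset (ℤ × ℤ)) :
    (ℤ × ℤ → ℝ) →ₗ[ℝ] ℕ × ℕ → ℝ where
  toFun q ℓ := (∑ k ∈ Λ, (q k : ℂ) * ζ k ℓ).re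
  map_add' q q' := by
    ext ℓ
    simp [add_mul, sum_add_distrib]
  map_smul' c q := by
    ext ℓ
    simp [mul_sum, mul_assoc]

lemma conj_sum_mul_gridChar (N₁ N₂ : ℕ) {Λ : Finset (ℤ × ℤ)} (hΛ : ∀ k ∈ Λ, -k ∈ Λ)
    {q : ℤ × ℤ → ℝ} (hq : ∀ k, q k = q (-k)) (ℓ : ℕ × ℕ) :
    starRingEnd ℂ (∑ k ∈ Λ, (q k : ℂ) * gridChar N₁ N₂ k ℓ) =
      ∑ k ∈ Λ, (q k : ℂ) * gridChar N₁ N₂ k ℓ := by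
  rw [map_sum]
  refine sum_nbij' Neg.neg Neg.neg hΛ (fun k hk => by simpa using hΛ _ hk) (fun k _ => neg_neg k)
    (fun k _ => neg_neg k) fun k _ => ?_
  rw [map_mul, conj_ofReal, conj_gridChar, hq k]

noncomputable def freqBox (n₁ n₂ : ℕ) : Finset (ℤ × ℤ) :=
  Icc (-(n₁ : ℤ)) n₁ ×ˢ Icc (-(n₂ : ℤ)) n₂

lemma neg_mem_freqBox {n₁ n₂ : ℕ} {k : ℤ × ℤ} (hk : k ∈ freqBox n₁ n₂) :
    -k ∈ freqBox n₁ n₂ := by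
  simp only [freqBox, mem_product, mem_Icc, Prod.fst_neg, Prod.snd_neg] at hk ⊢
  omega

lemma eq_zero_of_trigPolyEval_gridChar_eq_zero {n₁ n₂ N₁ N₂ : ℕ} (h₁ : 2 * n₁ < N₁)
    (h₂ : 2 * n₂ < N₂) {q : ℤ × ℤ → ℝ} (hq : q ∈ symmetricTrigPoly (freqBox n₁ n₂))
    (h : ∀ ℓ ∈ range N₁ ×ˢ range N₂, trigPolyEval (gridChar N₁ N₂) (freqBox n₁ n₂) q ℓ = 0) :
    q = 0 := by
  have hsum : ∀ ℓ ∈ range N₁ ×ˢ range N₂,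
      ∑ k ∈ freqBox n₁ n₂, (q k : ℂ) * gridChar N₁ N₂ k ℓ = 0 := fun ℓ hℓ => by
    rw [← conj_eq_iff_re.1 (conj_sum_mul_gridChar N₁ N₂ (fun _ => neg_mem_freqBox) hq.1 ℓ)]
    exact_mod_cast h ℓ hℓ
  funext k
  by_cases hk : k ∈ freqBox n₁ n₂
  · exact_mod_cast eq_zero_of_sum_mul_gridChar_eq_zero (by omega) (by omega)
      (injOn_intCast_Icc h₁) (injOn_intCast_Icc h₂) hsum k hk
  · exact hq.2 k hk

end Fourier

section ExpDual

open Real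

variable {E ι : Type*} [AddCommGroup E] [Module ℝ E]

noncomputable def expDual (s : Finset ι) (w : ι → ℝ) (L : E →ₗ[ℝ] ι → ℝ) (f : E →ₗ[ℝ] ℝ)
    (x : E) : ℝ :=
  ∑ i ∈ s, w i * exp (-L x i) + f x

variable {s : Finset ι} {w : ι → ℝ} {L : E →ₗ[ℝ] ι → ℝ}

lemma exists_apply_ne_of_ne {V : Submodule ℝ E} (hL : ∀ x ∈ V, (∀ i ∈ s, L x i = 0) → x = 0)
    {x y : E} (hx : x ∈ V) (hy : y ∈ V) (hxy : x ≠ y) : ∃ i ∈ s, L x i ≠ L y i := by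
  by_contra! h
  exact hxy (sub_eq_zero.1 (hL _ (V.sub_mem hx hy) fun i hi => by simp [h i hi]))

lemma strictConvexOn_expDual (hw : ∀ i ∈ s, 0 < w i) {V : Submodule ℝ E}
    (hL : ∀ x ∈ V, (∀ i ∈ s, L x i = 0) → x = 0) (f : E →ₗ[ℝ] ℝ) :
    StrictConvexOn ℝ V (expDual s w L f) := by
  refine ⟨V.convex, fun x hx y hy hxy a b ha hb hab => ?_⟩
  obtain ⟨i₀, hi₀, hne⟩ := exists_apply_ne_of_ne hL hx hy hxy
  have hL_comb : ∀ i, -L (a • x + b • y) i = a • -L x i + b • -L y i := fun i => by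
    simp only [map_add, map_smul, Pi.add_apply, Pi.smul_apply, smul_eq_mul]; ring
  have hle : ∀ i ∈ s, w i * exp (-L (a • x + b • y) i) ≤
      a * (w i * exp (-L x i)) + b * (w i * exp (-L y i)) := fun i hi => by
    have := convexOn_exp.2 trivial trivial ha.le hb.le hab (x := -L x i) (y := -L y i)
    rw [hL_comb]
    simp only [smul_eq_mul] at this ⊢
    nlinarith [hw i hi]
  have hlt : w i₀ * exp (-L (a • x + b • y) i₀) <
      a * (w i₀ * exp (-L x i₀)) + b * (w i₀ * exp (-L y i₀)) := by
    have := strictConvexOn_exp.2 trivial trivial (neg_injective.ne hne) ha hb hab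
    rw [hL_comb]
    simp only [smul_eq_mul] at this ⊢
    nlinarith [hw i₀ hi₀]
  have hsum := sum_lt_sum hle ⟨i₀, hi₀, hlt⟩
  rw [sum_add_distrib, ← mul_sum, ← mul_sum] at hsum
  unfold expDual
  rw [f.map_add, f.map_smul, f.map_smul, smul_eq_mul, smul_eq_mul, smul_eq_mul, smul_eq_mul]
  linarith

lemma iteratedDeriv_two_expDual_line (f : E →ₗ[ℝ] ℝ) (q δ : E) :
    iteratedDeriv 2 (fun t : ℝ => expDual s w L f (q + t • δ)) 0 =
      ∑ i ∈ s, w i * exp (-L q i) * L δ i ^ 2 := by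
  have hline : (fun t : ℝ => expDual s w L f (q + t • δ)) = fun t =>
      (∑ i ∈ s, w i * exp (-L q i) * exp (-L δ i * t)) + (f q + f δ * t) := by
    funext t
    simp only [expDual, map_add, map_smul, Pi.add_apply, Pi.smul_apply, smul_eq_mul,
      neg_add, exp_add]
    congr 1
    · refine sum_congr rfl fun i _ => ?_
      rw [neg_mul, mul_comm (L δ i), mul_assoc]
    · ring
  rw [hline, iteratedDeriv_fun_add (by fun_prop) (by fun_prop),
    iteratedDeriv_fun_sum fun i _ => by fun_prop]
  simp only [iteratedDeriv_const_mul_field, iteratedDeriv_exp_const_mul,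
    iteratedDeriv_const_add two_pos, iteratedDeriv_const_mul_field (f δ) (fun t => t),
    iteratedDeriv_fun_id_zero]
  simp

lemma eq_zero_of_sum_mul_exp_mul_sq_eq_zero (hw : ∀ i ∈ s, 0 < w i) {V : Submodule ℝ E}
    (hL : ∀ x ∈ V, (∀ i ∈ s, L x i = 0) → x = 0) {q δ : E} (hδ : δ ∈ V)
    (h : ∑ i ∈ s, w i * exp (-L q i) * L δ i ^ 2 = 0) : δ = 0 := by
  have hpos : ∀ i ∈ s, 0 < w i * exp (-L q i) := fun i hi => mul_pos (hw i hi) (exp_pos _)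
  have hterm := (sum_eq_zero_iff_of_nonneg fun i hi => mul_nonneg (hpos i hi).le (sq_nonneg _)).1 h
  exact hL δ hδ fun i hi =>
    pow_eq_zero_iff two_ne_zero |>.1 ((mul_eq_zero.1 (hterm i hi)).resolve_left (hpos i hi).ne')

end ExpDual

/-- The dual functional `J_∞` is strictly convex on the space of real symmetric
trigonometric polynomials with support `Λ` (no positivity constraint); its second
variation along `δQ` is `(1/|N|) Σ_ℓ Ψ(ζ_ℓ) e^{−Q(ζ_ℓ)} δQ(ζ_ℓ)²`, which vanishes
only for `δQ = 0`. -/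
theorem stmt14 (n₁ n₂ N₁ N₂ : ℕ) (h₁ : 2 * n₁ < N₁) (h₂ : 2 * n₂ < N₂)
    (ζ : ℤ × ℤ → ℕ × ℕ → ℂ)
    (hζ : ∀ k ℓ, ζ k ℓ =
      Complex.exp (Complex.I * (k.1 : ℂ) * (ℓ.1 : ℂ) * (2 * Real.pi / N₁)) *
      Complex.exp (Complex.I * (k.2 : ℂ) * (ℓ.2 : ℂ) * (2 * Real.pi / N₂)))
    (Ψ : ℕ × ℕ → ℝ) (hΨ : ∀ ℓ ∈ Finset.range N₁ ×ˢ Finset.range N₂, 0 < Ψ ℓ)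
    (c : ℤ × ℤ → ℝ)
    (Qv : (ℤ × ℤ → ℝ) → ℕ × ℕ → ℝ)
    (hQv : ∀ q ℓ, Qv q ℓ =
      (∑ k ∈ Finset.Icc (-(n₁ : ℤ)) (n₁ : ℤ) ×ˢ Finset.Icc (-(n₂ : ℤ)) (n₂ : ℤ),
        (q k : ℂ) * ζ k ℓ).re)
    (B : Set (ℤ × ℤ → ℝ))
    (hB : B = {q | (∀ k, q k = q (-k)) ∧
      ∀ k ∉ Finset.Icc (-(n₁ : ℤ)) (n₁ : ℤ) ×ˢ Finset.Icc (-(n₂ : ℤ)) (n₂ : ℤ), q k = 0})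
    (J : (ℤ × ℤ → ℝ) → ℝ)
    (hJ : ∀ q, J q = (1 / ((N₁ : ℝ) * (N₂ : ℝ))) *
        ∑ ℓ ∈ Finset.range N₁ ×ˢ Finset.range N₂,
          Ψ ℓ * Real.exp (-(Qv q ℓ))
      + ∑ k ∈ Finset.Icc (-(n₁ : ℤ)) (n₁ : ℤ) ×ˢ Finset.Icc (-(n₂ : ℤ)) (n₂ : ℤ),
          q k * c k) :
    StrictConvexOn ℝ B J ∧
    ∀ q ∈ B, ∀ δq ∈ B,
      iteratedDeriv 2 (fun t : ℝ => J (q + t • δq)) 0 =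
        (1 / ((N₁ : ℝ) * (N₂ : ℝ))) *
          ∑ ℓ ∈ Finset.range N₁ ×ˢ Finset.range N₂,
            Ψ ℓ * Real.exp (-(Qv q ℓ)) * Qv δq ℓ ^ 2 ∧
      ((1 / ((N₁ : ℝ) * (N₂ : ℝ))) *
          ∑ ℓ ∈ Finset.range N₁ ×ˢ Finset.range N₂,
            Ψ ℓ * Real.exp (-(Qv q ℓ)) * Qv δq ℓ ^ 2 = 0 → δq = 0) := by
  have hN : (0 : ℝ) < N₁ * N₂ := mod_cast Nat.mul_pos (by omega) (by omega)
  set T := trigPolyEval (gridChar N₁ N₂) (freqBox n₁ n₂)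
  set G := range N₁ ×ˢ range N₂
  set w : ℕ × ℕ → ℝ := fun ℓ => 1 / ((N₁ : ℝ) * N₂) * Ψ ℓ
  obtain rfl : ζ = gridChar N₁ N₂ := funext fun k => funext (hζ k)
  obtain rfl : Qv = T := funext fun q => funext (hQv q)
  obtain rfl : B = symmetricTrigPoly (freqBox n₁ n₂) := hB
  obtain rfl : J = expDual G w T (∑ k ∈ freqBox n₁ n₂, c k • LinearMap.proj k) :=
    funext fun q => by
      rw [hJ, expDual, mul_sum]
      congr 1
      · exact sum_congr rfl fun ℓ _ => (mul_assoc _ _ _).symm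
      · simp [freqBox, mul_comm]
  have hw : ∀ ℓ ∈ G, 0 < w ℓ := fun ℓ hℓ => mul_pos (by positivity) (hΨ ℓ hℓ)
  have hker : ∀ q ∈ symmetricTrigPoly (freqBox n₁ n₂), (∀ ℓ ∈ G, T q ℓ = 0) → q = 0 :=
    fun _ hq => eq_zero_of_trigPolyEval_gridChar_eq_zero h₁ h₂ hq
  have hsecond : ∀ q δ, 1 / ((N₁ : ℝ) * N₂) * ∑ ℓ ∈ G, Ψ ℓ * Real.exp (-T q ℓ) * T δ ℓ ^ 2 =
      ∑ ℓ ∈ G, w ℓ * Real.exp (-T q ℓ) * T δ ℓ ^ 2 := fun q δ => by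
    simp only [w, mul_sum, mul_assoc]
  refine ⟨strictConvexOn_expDual hw hker _, fun q _ δ hδ => ⟨?_, fun h => ?_⟩⟩
  · rw [iteratedDeriv_two_expDual_line, hsecond]
  · exact eq_zero_of_sum_mul_exp_mul_sq_eq_zero hw hker hδ (hsecond q δ ▸ h)
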